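/- Let S ⊆ H1, T ⊆ H2 be closed subspaces and A : H1 → H2 a bounded operator. Then A is (S,T)-complementable if and only if the Dixmier angle cosines satisfy c₀(S, closure(A*(T⊥))) < 1 and c₀(T, closure(A(S⊥))) < 1. -/

import Mathlib

/-!
Both sides split into a condition on `S` and one on `T`. An idempotent `P` with `range P* = S`
and `A (range P) ⊆ T` exists iff `S⊥ + A⁻¹(T) = H₁`: its kernel is `S⊥`, and conversely the
projection along `S⊥` onto a closed complement of `S⊥` inside `A⁻¹(T)` works; `Q ↦ Q*` gives the
dual statement for `T` and `A*`. As `closure(A*(T⊥))⊥ = A⁻¹(T)`, it remains to see that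
`c₀(M, N) < 1 ↔ M⊥ + N⊥ = H` for closed `M, N`. If `c₀ < 1`, then `‖P_M P_N‖ ≤ c₀ < 1`, so
`1 - P_M P_N` is invertible, and its range lies in `M⊥ + N⊥`. Conversely, the open mapping
theorem bounds by some `C` the `N⊥`-part `b` of a unit vector `x ∈ M`; as `⟪b, x⟫ = 1`, this
forces `|⟪x, y⟫|² ≤ 1 - 1/C²` for unit vectors `y ∈ N`.
-/

open ContinuousLinearMap Submodule
open scoped InnerProductSpace InnerProduct

noncomputable def dixmierAngle {H : Type*} [NormedAddCommGroup H] [InnerProductSpace ℂ H]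
    (M N : Submodule ℂ H) : ℝ :=
  sSup {r : ℝ | ∃ x ∈ M, ∃ y ∈ N, ‖x‖ = 1 ∧ ‖y‖ = 1 ∧ r = ‖(inner ℂ x y : ℂ)‖}

theorem one_le_norm_sq_mul_one_sub_norm_inner_sq {𝕜 E : Type*} [RCLike 𝕜] [NormedAddCommGroup E]
    [InnerProductSpace 𝕜 E] {x y b : E} (hx : ‖x‖ = 1) (hy : ‖y‖ = 1)
    (hbx : ⟪b, x⟫_𝕜 = 1) (hby : ⟪b, y⟫_𝕜 = 0) : 1 ≤ ‖b‖ ^ 2 * (1 - ‖⟪y, x⟫_𝕜‖ ^ 2) := by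
  set v := x - ⟪y, x⟫_𝕜 • y
  have hv : v = (𝕜 ∙ y)ᗮ.starProjection x := by
    rw [starProjection_orthogonal', sub_apply, one_apply_eq_self,
      starProjection_unit_singleton 𝕜 hy]
  have hnorm_v : ‖v‖ ^ 2 = 1 - ‖⟪y, x⟫_𝕜‖ ^ 2 := by
    have := norm_sq_eq_add_norm_sq_starProjection x (𝕜 ∙ y)
    rw [← hv, starProjection_unit_singleton 𝕜 hy, norm_smul, hy, mul_one, hx] at this
    linarith
  have hbv : ⟪b, v⟫_𝕜 = 1 := by
    rw [inner_sub_right, inner_smul_right, hbx, hby, mul_zero, sub_zero]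
  calc (1 : ℝ) = ‖⟪b, v⟫_𝕜‖ ^ 2 := by rw [hbv, norm_one, one_pow]
    _ ≤ (‖b‖ * ‖v‖) ^ 2 := by gcongr; exact norm_inner_le_norm b v
    _ = ‖b‖ ^ 2 * (1 - ‖⟪y, x⟫_𝕜‖ ^ 2) := by rw [mul_pow, hnorm_v]

section DixmierAngle

variable {H : Type*} [NormedAddCommGroup H] [InnerProductSpace ℂ H] {M N : Submodule ℂ H}

theorem dixmierAngle_nonneg : 0 ≤ dixmierAngle M N :=
  Real.sSup_nonneg <| by rintro r ⟨x, -, y, -, -, -, rfl⟩; positivity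

theorem dixmierAngle_le {k : ℝ} (hk : 0 ≤ k)
    (h : ∀ x ∈ M, ∀ y ∈ N, ‖x‖ = 1 → ‖y‖ = 1 → ‖⟪x, y⟫_ℂ‖ ≤ k) : dixmierAngle M N ≤ k :=
  Real.sSup_le (by rintro r ⟨x, hx, y, hy, hx1, hy1, rfl⟩; exact h x hx y hy hx1 hy1) hk

theorem norm_inner_le_dixmierAngle {x y : H} (hx : x ∈ M) (hy : y ∈ N) (hx1 : ‖x‖ = 1)
    (hy1 : ‖y‖ = 1) : ‖⟪x, y⟫_ℂ‖ ≤ dixmierAngle M N := by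
  refine le_csSup ⟨1, ?_⟩ ⟨x, hx, y, hy, hx1, hy1, rfl⟩
  rintro r ⟨x, -, y, -, hx1, hy1, rfl⟩
  simpa [hx1, hy1] using norm_inner_le_norm (𝕜 := ℂ) x y

theorem norm_inner_le_dixmierAngle_mul {x y : H} (hx : x ∈ M) (hy : y ∈ N) :
    ‖⟪x, y⟫_ℂ‖ ≤ dixmierAngle M N * (‖x‖ * ‖y‖) := by
  rcases eq_or_ne x 0 with rfl | hx0
  · simp
  rcases eq_or_ne y 0 with rfl | hy0
  · simp
  have key := norm_inner_le_dixmierAngle (M.smul_mem (‖x‖⁻¹ : ℂ) hx) (N.smul_mem (‖y‖⁻¹ : ℂ) hy)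
    (norm_smul_inv_norm hx0) (norm_smul_inv_norm hy0)
  rw [inner_smul_left, inner_smul_right, norm_mul, norm_mul, RCLike.norm_conj] at key
  simp only [norm_inv, Complex.norm_real, norm_norm] at key
  rw [← div_le_iff₀ (by positivity)]
  calc ‖⟪x, y⟫_ℂ‖ / (‖x‖ * ‖y‖) = ‖x‖⁻¹ * (‖y‖⁻¹ * ‖⟪x, y⟫_ℂ‖) := by field_simp
    _ ≤ dixmierAngle M N := key

theorem norm_starProjection_comp_starProjection_le_dixmierAngle [M.HasOrthogonalProjection]
    [N.HasOrthogonalProjection] :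
    ‖M.starProjection ∘L N.starProjection‖ ≤ dixmierAngle M N := by
  refine opNorm_le_bound _ dixmierAngle_nonneg fun z => ?_
  set y := N.starProjection z
  set x := M.starProjection y
  have hxy : ‖x‖ ^ 2 = ‖⟪x, y⟫_ℂ‖ := by
    have : ⟪x, y⟫_ℂ = ⟪x, x⟫_ℂ := calc
      ⟪x, y⟫_ℂ = ⟪M.starProjection x, y⟫_ℂ := by
        rw [starProjection_eq_self_iff.mpr (starProjection_apply_mem M y)]
      _ = ⟪x, x⟫_ℂ := inner_starProjection_left_eq_right M x y
    rw [this, inner_self_eq_norm_sq_to_K]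
    simp
  have hx_le : ‖x‖ ≤ dixmierAngle M N * ‖y‖ := by
    rcases (norm_nonneg x).eq_or_lt with hx0 | hx0
    · rw [← hx0]; exact mul_nonneg dixmierAngle_nonneg (norm_nonneg y)
    · have := hxy ▸ norm_inner_le_dixmierAngle_mul (starProjection_apply_mem M y)
        (starProjection_apply_mem N z)
      nlinarith
  calc ‖x‖ ≤ dixmierAngle M N * ‖y‖ := hx_le
    _ ≤ dixmierAngle M N * ‖z‖ := by
      gcongr
      · exact dixmierAngle_nonneg
      · exact N.norm_starProjection_apply_le z

theorem sup_orthogonal_eq_top_of_dixmierAngle_lt_one [CompleteSpace H] [M.HasOrthogonalProjection]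
    [N.HasOrthogonalProjection] (h : dixmierAngle M N < 1) : Mᗮ ⊔ Nᗮ = ⊤ := by
  set T := M.starProjection ∘L N.starProjection
  have hT : ‖T‖ < 1 := norm_starProjection_comp_starProjection_le_dixmierAngle.trans_lt h
  have hmem : ∀ w, (1 - T) w ∈ Mᗮ ⊔ Nᗮ := fun w => by
    have := add_mem_sup (sub_starProjection_mem_orthogonal (K := M) (N.starProjection w))
      (sub_starProjection_mem_orthogonal (K := N) w)
    rwa [sub_add_sub_cancel'] at this
  refine eq_top_iff.2 fun z _ => ?_
  have hz : (1 - T) ((↑(Units.oneSub T hT)⁻¹ : H →L[ℂ] H) z) = z := by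
    rw [← Units.val_oneSub T hT, ← mul_apply_eq_comp, Units.mul_inv, one_apply_eq_self]
  exact hz ▸ hmem _

theorem dixmierAngle_lt_one_of_sup_orthogonal_eq_top [CompleteSpace H] (h : Mᗮ ⊔ Nᗮ = ⊤) :
    dixmierAngle M N < 1 := by
  have : CompleteSpace Mᗮ := (isClosed_orthogonal M).completeSpace_coe
  have : CompleteSpace Nᗮ := (isClosed_orthogonal N).completeSpace_coe
  have hsurj : Function.Surjective (Mᗮ.subtypeL.coprod Nᗮ.subtypeL) := fun z => by
    obtain ⟨a, ha, b, hb, rfl⟩ := mem_sup.1 (h ▸ mem_top : z ∈ Mᗮ ⊔ Nᗮ)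
    exact ⟨(⟨a, ha⟩, ⟨b, hb⟩), rfl⟩
  obtain ⟨C, hC, hpre⟩ := exists_preimage_norm_le _ hsurj
  have hbound : ∀ x ∈ M, ∀ y ∈ N, ‖x‖ = 1 → ‖y‖ = 1 → ‖⟪x, y⟫_ℂ‖ ^ 2 ≤ 1 - (C ^ 2)⁻¹ := by
    intro x hx y hy hx1 hy1
    obtain ⟨⟨a, b⟩, hab, habC⟩ := hpre x
    have hbC : ‖(b : H)‖ ≤ C := by simpa [hx1] using (_root_.norm_snd_le _).trans habC
    have hbx : ⟪(b : H), x⟫_ℂ = 1 := by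
      have hax : ⟪(a : H), x⟫_ℂ = 0 := inner_left_of_mem_orthogonal hx a.2
      have hab : (a : H) + b = x := hab
      calc ⟪(b : H), x⟫_ℂ = ⟪(a : H) + b, x⟫_ℂ := by rw [inner_add_left, hax, zero_add]
        _ = 1 := by rw [hab, inner_self_eq_norm_sq_to_K, hx1]; simp
    have hby : ⟪(b : H), y⟫_ℂ = 0 := inner_left_of_mem_orthogonal hy b.2
    have key := one_le_norm_sq_mul_one_sub_norm_inner_sq hx1 hy1 hbx hby
    have hpos : 0 ≤ 1 - ‖⟪y, x⟫_ℂ‖ ^ 2 := by nlinarith [sq_nonneg ‖(b : H)‖]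
    have : (C ^ 2)⁻¹ ≤ 1 - ‖⟪y, x⟫_ℂ‖ ^ 2 :=
      (inv_le_iff_one_le_mul₀' (by positivity)).2 (key.trans (by gcongr))
    rw [norm_inner_symm]
    linarith
  calc dixmierAngle M N ≤ √(1 - (C ^ 2)⁻¹) :=
        dixmierAngle_le (Real.sqrt_nonneg _) fun x hx y hy hx1 hy1 =>
          Real.le_sqrt_of_sq_le (hbound x hx y hy hx1 hy1)
    _ < 1 := by
      rw [Real.sqrt_lt' one_pos]
      have : 0 < (C ^ 2)⁻¹ := by positivity
      linarith

theorem dixmierAngle_lt_one_iff [CompleteSpace H] [M.HasOrthogonalProjection]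
    [N.HasOrthogonalProjection] : dixmierAngle M N < 1 ↔ Mᗮ ⊔ Nᗮ = ⊤ :=
  ⟨sup_orthogonal_eq_top_of_dixmierAngle_lt_one, dixmierAngle_lt_one_of_sup_orthogonal_eq_top⟩

end DixmierAngle

section Complementable

variable {𝕜 E F : Type*} [RCLike 𝕜] [NormedAddCommGroup E] [InnerProductSpace 𝕜 E] [CompleteSpace E]
  [NormedAddCommGroup F] [InnerProductSpace 𝕜 F]

theorem IsIdempotentElem.range_adjoint_eq_orthogonal_ker {P : E →L[𝕜] E} (hP : IsIdempotentElem P) :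
    LinearMap.range (P† : E →ₗ[𝕜] E) = (LinearMap.ker (P : E →ₗ[𝕜] E))ᗮ := by
  have hclosed : IsClosed (LinearMap.range (P† : E →ₗ[𝕜] E) : Set E) :=
    (star_eq_adjoint P ▸ hP.star).isTopCompl.isClosed
  rw [← adjoint_adjoint P, ← orthogonal_range, adjoint_adjoint, orthogonal_orthogonal_eq_closure,
    hclosed.submodule_topologicalClosure_eq]

theorem exists_isClosed_isCompl_le_of_sup_eq_top {L M : Submodule 𝕜 E} (hL : IsClosed (L : Set E))
    (hM : IsClosed (M : Set E)) (h : M ⊔ L = ⊤) :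
    ∃ W ≤ L, IsClosed (W : Set E) ∧ IsCompl W M := by
  have : CompleteSpace ↥(L ⊓ M) := (hL.inter hM).completeSpace_coe
  refine ⟨(L ⊓ M)ᗮ ⊓ L, inf_le_right, (isClosed_orthogonal _).inter hL, ?_, ?_⟩
  · rw [disjoint_iff, eq_bot_iff, ← inf_orthogonal_eq_bot (L ⊓ M)]
    exact fun x ⟨⟨hxo, hxL⟩, hxM⟩ => ⟨⟨hxL, hxM⟩, hxo⟩
  · rw [codisjoint_iff, eq_top_iff, ← h]
    refine sup_le le_sup_right ?_
    calc L = L ⊓ M ⊔ (L ⊓ M)ᗮ ⊓ L :=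
          (sup_orthogonal_inf_of_hasOrthogonalProjection inf_le_left).symm
      _ ≤ (L ⊓ M)ᗮ ⊓ L ⊔ M := sup_le (inf_le_right.trans le_sup_right) le_sup_left

theorem exists_isIdempotentElem_range_adjoint_eq_and_range_comp_le_iff (S : Submodule 𝕜 E)
    [S.HasOrthogonalProjection] {T : Submodule 𝕜 F} (hT : IsClosed (T : Set F)) (A : E →L[𝕜] F) :
    (∃ P : E →L[𝕜] E, IsIdempotentElem P ∧ LinearMap.range (P† : E →ₗ[𝕜] E) = S ∧
      LinearMap.range (A ∘L P : E →ₗ[𝕜] F) ≤ T) ↔ Sᗮ ⊔ T.comap (A : E →ₗ[𝕜] F) = ⊤ := by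
  constructor
  · rintro ⟨P, hP, hrange, hAP⟩
    have hker : LinearMap.ker (P : E →ₗ[𝕜] E) = Sᗮ := by
      rw [← hrange, ← adjoint_adjoint P, ← orthogonal_range, adjoint_adjoint]
    refine eq_top_iff.2 fun z _ => ?_
    have hPz : z - P z ∈ Sᗮ := by
      rw [← hker, LinearMap.mem_ker, coe_coe, map_sub, ← mul_apply_eq_comp, hP.eq, sub_self]
    have hAPz : P z ∈ T.comap (A : E →ₗ[𝕜] F) := hAP ⟨z, rfl⟩
    simpa using add_mem_sup hPz hAPz
  · intro h
    obtain ⟨W, hWL, hW, hcompl⟩ :=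
      exists_isClosed_isCompl_le_of_sup_eq_top (hT.preimage A.continuous) (isClosed_orthogonal S) h
    have htop := hcompl.isTopCompl_of_isClosed hW (isClosed_orthogonal S)
    refine ⟨W.projectionL Sᗮ htop, isIdempotentElem_projectionL htop, ?_, ?_⟩
    · rw [(isIdempotentElem_projectionL htop).range_adjoint_eq_orthogonal_ker, ker_projectionL,
        orthogonal_orthogonal]
    · rintro _ ⟨z, rfl⟩
      exact hWL (projectionL_apply_mem htop z)

theorem exists_isIdempotentElem_range_eq_and_range_adjoint_comp_le_iff [CompleteSpace F]
    {S : Submodule 𝕜 E} (hS : IsClosed (S : Set E)) (T : Submodule 𝕜 F) [T.HasOrthogonalProjection]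
    (A : E →L[𝕜] F) :
    (∃ Q : F →L[𝕜] F, IsIdempotentElem Q ∧ LinearMap.range (Q : F →ₗ[𝕜] F) = T ∧
      LinearMap.range ((Q ∘L A)† : F →ₗ[𝕜] E) ≤ S) ↔ Tᗮ ⊔ S.comap (A† : F →ₗ[𝕜] E) = ⊤ := by
  rw [← exists_isIdempotentElem_range_adjoint_eq_and_range_comp_le_iff T hS]
  constructor
  · rintro ⟨Q, hQ, hrange, hQA⟩
    exact ⟨Q†, star_eq_adjoint Q ▸ hQ.star, by rwa [adjoint_adjoint], by rwa [← adjoint_comp]⟩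
  · rintro ⟨P, hP, hrange, hAP⟩
    exact ⟨P†, star_eq_adjoint P ▸ hP.star, hrange, by rwa [adjoint_comp, adjoint_adjoint]⟩

theorem orthogonal_topologicalClosure_map_adjoint [CompleteSpace F] (A : E →L[𝕜] F)
    (T : Submodule 𝕜 F) [T.HasOrthogonalProjection] :
    (Tᗮ.map (A† : F →ₗ[𝕜] E)).topologicalClosureᗮ = T.comap (A : E →ₗ[𝕜] F) := by
  ext x
  rw [orthogonal_closure, mem_comap, ← T.orthogonal_orthogonal, mem_orthogonal, mem_orthogonal]
  simp [adjoint_inner_left]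

end Complementable

variable {H₁ H₂ : Type*} [NormedAddCommGroup H₁] [InnerProductSpace ℂ H₁] [CompleteSpace H₁]
  [NormedAddCommGroup H₂] [InnerProductSpace ℂ H₂] [CompleteSpace H₂]

theorem complementable_iff_dixmier_angles
    (S : Submodule ℂ H₁) [CompleteSpace S] (T : Submodule ℂ H₂) [CompleteSpace T]
    (A : H₁ →L[ℂ] H₂) :
    (∃ (P : H₁ →L[ℂ] H₁) (Q : H₂ →L[ℂ] H₂),
      IsIdempotentElem P ∧ IsIdempotentElem Q ∧
      LinearMap.range (adjoint P : H₁ →ₗ[ℂ] H₁) = S ∧ LinearMap.range (Q : H₂ →ₗ[ℂ] H₂) = T ∧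
      LinearMap.range (A ∘L P : H₁ →ₗ[ℂ] H₂) ≤ T ∧ LinearMap.range (adjoint (Q ∘L A) : H₂ →ₗ[ℂ] H₁) ≤ S) ↔
    (dixmierAngle S (Submodule.map (adjoint A).toLinearMap Tᗮ).topologicalClosure < 1 ∧
      dixmierAngle T (Submodule.map A.toLinearMap Sᗮ).topologicalClosure < 1) := by
  have hS : IsClosed (S : Set H₁) := (completeSpace_coe_iff_isComplete.1 ‹_›).isClosed
  have hT : IsClosed (T : Set H₂) := (completeSpace_coe_iff_isComplete.1 ‹_›).isClosed
  have hA : (Sᗮ.map (A : H₁ →ₗ[ℂ] H₂)).topologicalClosureᗮ = S.comap (A† : H₂ →ₗ[ℂ] H₁) := by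
    simpa using orthogonal_topologicalClosure_map_adjoint (A†) S
  rw [dixmierAngle_lt_one_iff, dixmierAngle_lt_one_iff, orthogonal_topologicalClosure_map_adjoint,
    hA, ← exists_isIdempotentElem_range_adjoint_eq_and_range_comp_le_iff S hT,
    ← exists_isIdempotentElem_range_eq_and_range_adjoint_comp_le_iff hS T]
  exact ⟨fun ⟨P, Q, hP, hQ, hPS, hQT, hAP, hQA⟩ => ⟨⟨P, hP, hPS, hAP⟩, Q, hQ, hQT, hQA⟩,
    fun ⟨⟨P, hP, hPS, hAP⟩, Q, hQ, hQT, hQA⟩ => ⟨P, Q, hP, hQ, hPS, hQT, hAP, hQA⟩⟩
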